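/- arXiv:2605.23644 — 5 statements merged into one kernel-verified Lean document; each statement's English description precedes it below -/
import Mathlib

section
/- Let S be a set of points in a projective plane of order q, N = q^2+q+1 the number of lines, and for each integer k let L_k(S) be the set of lines meeting S in exactly k points. Then there exists k with |L_k(S)| ≥ N^{3/2} / sqrt(12·q·|S|·(1 − |S|/N) + 13·N). -/
set_option maxHeartbeats 1000000


noncomputable def Gclamp (t y : ℝ) : ℝ :=
  (t ^ 2 + 1 / 12) * max (-Real.sqrt (t ^ 2 + 1 / 12)) (min (Real.sqrt (t ^ 2 + 1 / 12)) y) -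
    (max (-Real.sqrt (t ^ 2 + 1 / 12)) (min (Real.sqrt (t ^ 2 + 1 / 12)) y)) ^ 3 / 3

lemma Gclamp_step (t x : ℝ) :
    max 0 (t ^ 2 - x ^ 2) ≤ Gclamp t (x + 1 / 2) - Gclamp t (x - 1 / 2) := by
  have hc : (0:ℝ) ≤ t ^ 2 + 1 / 12 := by positivity
  unfold Gclamp
  set s := Real.sqrt (t ^ 2 + 1 / 12) with hs
  have hs0 : 0 ≤ s := Real.sqrt_nonneg _
  have hs2 : s ^ 2 = t ^ 2 + 1 / 12 := Real.sq_sqrt hc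
  have ht2 : t ^ 2 = s ^ 2 - 1 / 12 := by linarith
  by_cases hA : x + 1 / 2 < -s
  · -- both below
    rw [max_eq_left (by linarith [min_le_right s (x + 1/2)] : min s (x + 1/2) ≤ -s),
        max_eq_left (by linarith [min_le_right s (x - 1/2)] : min s (x - 1/2) ≤ -s)]
    apply max_le (by linarith)
    nlinarith [mul_nonneg (by linarith : (0:ℝ) ≤ -x - s - 1/2) (by linarith : (0:ℝ) ≤ -x + s + 1/2)]
  · push_neg at hA
    by_cases hB : s < x - 1 / 2
    · -- both above
      rw [min_eq_left (by linarith : s ≤ x + 1/2), min_eq_left (by linarith : s ≤ x - 1/2),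
          max_eq_right (by linarith : -s ≤ s)]
      apply max_le (by linarith)
      nlinarith [mul_nonneg (by linarith : (0:ℝ) ≤ x - s - 1/2) (by linarith : (0:ℝ) ≤ x + s + 1/2)]
    · push_neg at hB
      by_cases hC : x - 1 / 2 < -s
      · rw [max_eq_left (by linarith [min_le_right s (x - 1/2)] : min s (x - 1/2) ≤ -s)]
        by_cases hD : s < x + 1 / 2
        · -- lower clamp and upper clamp
          rw [min_eq_left (by linarith : s ≤ x + 1/2), max_eq_right (by linarith : -s ≤ s)]
          apply max_le (by nlinarith)
          rw [ht2]
          nlinarith [mul_nonneg (mul_nonneg (sq_nonneg (2*s - 1)) hs0) hs0,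
            sq_nonneg (2*s - 1), sq_nonneg x]
        · -- lower clamp only
          push_neg at hD
          rw [min_eq_right hD, max_eq_right (by linarith : -s ≤ x + 1/2)]
          apply max_le
          · nlinarith [mul_nonneg (sq_nonneg (x + 1/2 + s)) (by linarith : (0:ℝ) ≤ 2*s - (x + 1/2))]
          · rw [ht2]
            nlinarith [mul_nonneg (sq_nonneg (x - 1/2 + s)) (by linarith : (0:ℝ) ≤ 2*s - (x - 1/2))]
      · push_neg at hC
        rw [min_eq_right hB, max_eq_right hC]
        by_cases hD : s < x + 1 / 2
        · -- upper clamp only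
          rw [min_eq_left (by linarith : s ≤ x + 1/2), max_eq_right (by linarith : -s ≤ s)]
          apply max_le
          · nlinarith [mul_nonneg (sq_nonneg (s - (x - 1/2))) (by linarith : (0:ℝ) ≤ 2*s + (x - 1/2))]
          · rw [ht2]
            nlinarith [mul_nonneg (sq_nonneg (s - (x + 1/2))) (by linarith : (0:ℝ) ≤ 2*s + (x + 1/2))]
        · -- no clamp
          push_neg at hD
          rw [min_eq_right hD, max_eq_right (by linarith : -s ≤ x + 1/2)]
          have heq : ((t ^ 2 + 1/12) * (x + 1/2) - (x + 1/2) ^ 3 / 3) -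
              ((t ^ 2 + 1/12) * (x - 1/2) - (x - 1/2) ^ 3 / 3) = t ^ 2 - x ^ 2 := by ring
          rw [heq]
          apply max_le _ le_rfl
          nlinarith [mul_nonneg (by linarith : (0:ℝ) ≤ s - 1/2 - x) (by linarith : (0:ℝ) ≤ x - 1/2 + s)]

lemma Gclamp_abs (t y : ℝ) :
    |Gclamp t y| ≤ 2 / 3 * (t ^ 2 + 1 / 12) * Real.sqrt (t ^ 2 + 1 / 12) := by
  have hc : (0:ℝ) ≤ t ^ 2 + 1 / 12 := by positivity
  unfold Gclamp
  set s := Real.sqrt (t ^ 2 + 1 / 12) with hs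
  have hs0 : 0 ≤ s := Real.sqrt_nonneg _
  have hs2 : s ^ 2 = t ^ 2 + 1 / 12 := Real.sq_sqrt hc
  set z := max (-s) (min s y) with hz
  have hz1 : -s ≤ z := le_max_left _ _
  have hz2 : z ≤ s := max_le (by linarith) (min_le_left _ _)
  rw [abs_le]
  constructor
  · nlinarith [mul_nonneg (sq_nonneg (z + s)) (by linarith : (0:ℝ) ≤ 2*s - z)]
  · nlinarith [mul_nonneg (sq_nonneg (s - z)) (by linarith : (0:ℝ) ≤ 2*s + z)]

lemma sum_max_le (t μ : ℝ) (n : ℕ) :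
    ∑ k ∈ Finset.range n, max 0 (t ^ 2 - ((k : ℝ) - μ) ^ 2) ≤
      4 / 3 * (t ^ 2 + 1 / 12) * Real.sqrt (t ^ 2 + 1 / 12) := by
  have key : ∑ k ∈ Finset.range n, max 0 (t ^ 2 - ((k : ℝ) - μ) ^ 2) ≤
      ∑ k ∈ Finset.range n,
        (Gclamp t ((k + 1 : ℕ) - μ - 1/2) - Gclamp t ((k : ℕ) - μ - 1/2)) := by
    apply Finset.sum_le_sum
    intro k _
    have := Gclamp_step t ((k : ℝ) - μ)
    have e1 : ((k : ℝ) - μ) + 1/2 = ((k + 1 : ℕ) : ℝ) - μ - 1/2 := by push_cast; ring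
    have e2 : ((k : ℝ) - μ) - 1/2 = ((k : ℕ) : ℝ) - μ - 1/2 := by push_cast; ring
    rw [e1, e2] at this
    exact this
  rw [Finset.sum_range_sub (fun k => Gclamp t ((k : ℕ) - μ - 1/2))] at key
  have h1 := Gclamp_abs t ((n : ℝ) - μ - 1/2)
  have h2 := Gclamp_abs t ((0 : ℕ) - μ - 1/2)
  rw [abs_le] at h1 h2
  calc _ ≤ _ := key
    _ ≤ _ := by push_cast at h2 ⊢; linarith [h1.2, h2.1]


/-- General lower bound on the largest secant-size class: there is some `k` with
`|L_k(S)| ≥ N^{3/2} / √(12 q |S| (1 - |S|/N) + 13 N)` where `N = q²+q+1`. -/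
theorem secant_class_lower_bound (q : ℕ) (P L : Type*) [Fintype P] [Fintype L] [DecidableEq P]
    (pts : L → Finset P)
    (hline : ∀ l : L, (pts l).card = q + 1)
    (hpoint : ∀ p : P, (Finset.univ.filter (fun l : L => p ∈ pts l)).card = q + 1)
    (hpp : ∀ p p' : P, p ≠ p' → ∃! l : L, p ∈ pts l ∧ p' ∈ pts l)
    (hll : ∀ l l' : L, l ≠ l' → ∃! p : P, p ∈ pts l ∧ p ∈ pts l')
    (hcardP : Fintype.card P = q ^ 2 + q + 1)
    (hcardL : Fintype.card L = q ^ 2 + q + 1)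
    (S : Finset P)
    (N : ℝ) (hN : N = (q : ℝ) ^ 2 + q + 1) :
    ∃ k : ℕ,
      Real.sqrt (N ^ 3) /
          Real.sqrt (12 * q * S.card * (1 - (S.card : ℝ) / N) + 13 * N)
        ≤ ((Finset.univ.filter (fun l : L => ((pts l) ∩ S).card = k)).card : ℝ) := by
  have hN0 : (0:ℝ) < N := by rw [hN]; positivity
  have hNL : ((Fintype.card L : ℕ) : ℝ) = N := by rw [hcardL, hN]; push_cast; ring
  -- counting identities
  have h1 : ∑ l : L, ((pts l) ∩ S).card = (q + 1) * S.card := by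
    have hinter : ∀ l : L, ((pts l) ∩ S).card = ∑ p ∈ S, if p ∈ pts l then 1 else 0 := by
      intro l
      rw [← Finset.card_filter]
      congr 1
      ext p
      simp [Finset.mem_inter, and_comm]
    calc ∑ l : L, ((pts l) ∩ S).card
        = ∑ l : L, ∑ p ∈ S, if p ∈ pts l then 1 else 0 :=
          Finset.sum_congr rfl fun l _ => hinter l
      _ = ∑ p ∈ S, ∑ l : L, if p ∈ pts l then 1 else 0 := Finset.sum_comm
      _ = ∑ p ∈ S, (q + 1) := by
          refine Finset.sum_congr rfl fun p _ => ?_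
          rw [← Finset.card_filter]
          exact hpoint p
      _ = (q + 1) * S.card := by rw [Finset.sum_const, smul_eq_mul, mul_comm]
  have h2 : ∑ l : L, ((pts l) ∩ S).offDiag.card = S.card * S.card - S.card := by
    have hoff : ∀ l : L, ((pts l) ∩ S).offDiag
        = S.offDiag.filter (fun z => z.1 ∈ pts l ∧ z.2 ∈ pts l) := by
      intro l
      ext ⟨a, b⟩
      simp only [Finset.mem_offDiag, Finset.mem_filter, Finset.mem_inter]
      tauto
    calc ∑ l : L, ((pts l) ∩ S).offDiag.card
        = ∑ l : L, ∑ z ∈ S.offDiag, if z.1 ∈ pts l ∧ z.2 ∈ pts l then 1 else 0 := by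
          refine Finset.sum_congr rfl fun l _ => ?_
          rw [hoff l, Finset.card_filter]
      _ = ∑ z ∈ S.offDiag, ∑ l : L, if z.1 ∈ pts l ∧ z.2 ∈ pts l then 1 else 0 := Finset.sum_comm
      _ = ∑ z ∈ S.offDiag, 1 := by
          refine Finset.sum_congr rfl fun z hz => ?_
          obtain ⟨-, -, hne⟩ := Finset.mem_offDiag.1 hz
          obtain ⟨l₀, hl₀, hu⟩ := hpp z.1 z.2 hne
          rw [← Finset.card_filter, Finset.card_eq_one]
          refine ⟨l₀, ?_⟩
          ext l
          simp only [Finset.mem_filter, Finset.mem_univ, true_and, Finset.mem_singleton]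
          exact ⟨fun h => hu l h, fun h => h ▸ hl₀⟩
      _ = S.card * S.card - S.card := by
          rw [Finset.sum_const, smul_eq_mul, mul_one, ← Finset.offDiag_card]
  -- real versions
  have hr1 : ∑ l : L, (((pts l) ∩ S).card : ℝ) = ((q:ℝ) + 1) * S.card := by
    have := congrArg (fun x : ℕ => (x : ℝ)) h1
    push_cast at this
    simpa using this
  have hcast : ((S.card * S.card - S.card : ℕ) : ℝ) = (S.card : ℝ) ^ 2 - S.card := by
    rcases Nat.eq_zero_or_pos S.card with h0 | hpos
    · simp [h0]
    · rw [Nat.cast_sub (Nat.le_mul_of_pos_left _ hpos)]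
      push_cast
      ring
  have hr2 : ∑ l : L, (((pts l) ∩ S).card : ℝ) ^ 2
      = (S.card : ℝ) ^ 2 - S.card + ((q:ℝ) + 1) * S.card := by
    have hstep : ∀ l : L, (((pts l) ∩ S).card : ℝ) ^ 2
        = (((pts l) ∩ S).offDiag.card : ℝ) + (((pts l) ∩ S).card : ℝ) := by
      intro l
      rcases Nat.eq_zero_or_pos ((pts l) ∩ S).card with h0 | hpos
      · rw [Finset.offDiag_card, h0]
        norm_num
      · rw [Finset.offDiag_card, Nat.cast_sub (Nat.le_mul_of_pos_left _ hpos)]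
        push_cast
        ring
    rw [Finset.sum_congr rfl (fun l _ => hstep l), Finset.sum_add_distrib, hr1]
    have h2r : ∑ l : L, (((pts l) ∩ S).offDiag.card : ℝ) = (S.card : ℝ) ^ 2 - S.card := by
      rw [← Nat.cast_sum, h2, hcast]
    rw [h2r]
  -- the largest class
  obtain ⟨k₀, hk₀mem, hk₀max⟩ := Finset.exists_max_image (Finset.range (q + 2))
      (fun k => (Finset.univ.filter (fun l : L => ((pts l) ∩ S).card = k)).card) ⟨0, by simp⟩
  refine ⟨k₀, ?_⟩
  set m : ℝ := ((Finset.univ.filter (fun l : L => ((pts l) ∩ S).card = k₀)).card : ℝ) with hm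
  -- fiberwise decomposition
  have hmaps : ∀ l : L, ((pts l) ∩ S).card ∈ Finset.range (q + 2) := by
    intro l
    refine Finset.mem_range.2 (Nat.lt_succ_of_le ?_)
    exact (Finset.card_le_card Finset.inter_subset_left).trans_eq (hline l)
  have hfib : ∀ f : ℕ → ℝ, ∑ l : L, f ((pts l) ∩ S).card
      = ∑ k ∈ Finset.range (q + 2),
          ((Finset.univ.filter (fun l : L => ((pts l) ∩ S).card = k)).card : ℝ) * f k := by
    intro f
    rw [← Finset.sum_fiberwise_of_maps_to (fun l _ => hmaps l) (fun l => f ((pts l) ∩ S).card)]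
    refine Finset.sum_congr rfl fun k _ => ?_
    rw [Finset.sum_congr rfl (fun l hl => by rw [(Finset.mem_filter.1 hl).2]),
      Finset.sum_const, nsmul_eq_mul]
  -- m is positive and at most N
  have hm0 : 0 < m := by
    rcases Nat.eq_zero_or_pos (Finset.univ.filter
        (fun l : L => ((pts l) ∩ S).card = k₀)).card with h0 | hpos
    · exfalso
      have hsum1 := hfib (fun _ => (1:ℝ))
      rw [Finset.sum_const, Finset.card_univ, nsmul_eq_mul, mul_one] at hsum1
      have hzero : ∀ k ∈ Finset.range (q + 2),
          ((Finset.univ.filter (fun l : L => ((pts l) ∩ S).card = k)).card : ℝ) * 1 = 0 := by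
        intro k hk
        have := hk₀max k hk
        rw [h0] at this
        simp at this ⊢
        exact this
      rw [Finset.sum_congr rfl hzero, Finset.sum_const, smul_zero] at hsum1
      rw [hNL] at hsum1
      linarith
    · rw [hm]
      exact_mod_cast hpos
  have hmN : m ≤ N := by
    rw [hm, ← hNL]
    exact_mod_cast (Finset.card_filter_le _ _).trans_eq Finset.card_univ
  -- mean and variance
  set μ : ℝ := ((q:ℝ) + 1) * S.card / N with hμ
  set V : ℝ := ∑ l : L, ((((pts l) ∩ S).card : ℝ) - μ) ^ 2 with hVdef
  have hV0 : 0 ≤ V := Finset.sum_nonneg fun l _ => sq_nonneg _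
  have hV : V = (q:ℝ) * S.card * (1 - (S.card : ℝ) / N) := by
    have e : ∀ l : L, ((((pts l) ∩ S).card : ℝ) - μ) ^ 2
        = (((pts l) ∩ S).card : ℝ) ^ 2 - 2 * μ * (((pts l) ∩ S).card : ℝ) + μ ^ 2 := by
      intro l; ring
    rw [hVdef, Finset.sum_congr rfl (fun l _ => e l)]
    rw [Finset.sum_add_distrib, Finset.sum_sub_distrib, ← Finset.mul_sum, hr1, hr2,
      Finset.sum_const, Finset.card_univ, nsmul_eq_mul, hNL, hμ]
    field_simp
    rw [hN]
    ring
  -- the analytic step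
  set t : ℝ := Real.sqrt (N ^ 2 / (4 * m ^ 2) - 1 / 12) with htdef
  have harg : (0:ℝ) ≤ N ^ 2 / (4 * m ^ 2) - 1 / 12 := by
    have h14 : (1:ℝ) / 4 ≤ N ^ 2 / (4 * m ^ 2) := by
      rw [div_le_div_iff₀ (by norm_num) (by positivity)]
      nlinarith
    linarith
  have ht2 : t ^ 2 = N ^ 2 / (4 * m ^ 2) - 1 / 12 := Real.sq_sqrt harg
  have hsqrtc : Real.sqrt (t ^ 2 + 1 / 12) = N / (2 * m) := by
    rw [ht2, show N ^ 2 / (4 * m ^ 2) - 1 / 12 + 1 / 12 = (N / (2 * m)) ^ 2 by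
      field_simp; ring]
    exact Real.sqrt_sq (by positivity)
  have hA : N * t ^ 2 ≤ V + ∑ l : L, max 0 (t ^ 2 - ((((pts l) ∩ S).card : ℝ) - μ) ^ 2) := by
    have hconst : ∑ l : L, t ^ 2 = N * t ^ 2 := by
      rw [Finset.sum_const, Finset.card_univ, nsmul_eq_mul, hNL]
    rw [← hconst, hVdef, ← Finset.sum_add_distrib]
    refine Finset.sum_le_sum fun l _ => ?_
    have := le_max_right 0 (t ^ 2 - ((((pts l) ∩ S).card : ℝ) - μ) ^ 2)
    linarith
  have hB : ∑ l : L, max 0 (t ^ 2 - ((((pts l) ∩ S).card : ℝ) - μ) ^ 2)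
      ≤ N ^ 3 / (6 * m ^ 2) := by
    rw [hfib (fun k => max 0 (t ^ 2 - ((k : ℝ) - μ) ^ 2))]
    have step1 : ∑ k ∈ Finset.range (q + 2),
        ((Finset.univ.filter (fun l : L => ((pts l) ∩ S).card = k)).card : ℝ)
          * max 0 (t ^ 2 - ((k : ℝ) - μ) ^ 2)
        ≤ ∑ k ∈ Finset.range (q + 2), m * max 0 (t ^ 2 - ((k : ℝ) - μ) ^ 2) := by
      refine Finset.sum_le_sum fun k hk => ?_
      refine mul_le_mul_of_nonneg_right ?_ (le_max_left _ _)
      rw [hm]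
      exact_mod_cast hk₀max k hk
    refine step1.trans ?_
    rw [← Finset.mul_sum]
    have step2 := sum_max_le t μ (q + 2)
    have step3 : m * (4 / 3 * (t ^ 2 + 1 / 12) * Real.sqrt (t ^ 2 + 1 / 12))
        = N ^ 3 / (6 * m ^ 2) := by
      rw [hsqrtc, ht2]
      field_simp
      ring
    rw [← step3]
    exact mul_le_mul_of_nonneg_left step2 hm0.le
  have hfin : N ^ 3 ≤ m ^ 2 * (12 * V + 13 * N) := by
    have e1 : N * t ^ 2 = N ^ 3 / (4 * m ^ 2) - N / 12 := by
      rw [ht2]; ring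
    have e2 : N ^ 3 / (12 * m ^ 2) = N ^ 3 / (4 * m ^ 2) - N ^ 3 / (6 * m ^ 2) := by
      ring
    have hdiv : N ^ 3 / (12 * m ^ 2) ≤ V + N / 12 := by
      rw [e2]
      linarith [hA, hB, e1]
    rw [div_le_iff₀ (by positivity : (0:ℝ) < 12 * m ^ 2)] at hdiv
    nlinarith [mul_nonneg (sq_nonneg m) hN0.le]
  -- conclusion
  have hDeq : 12 * (q:ℝ) * S.card * (1 - (S.card : ℝ) / N) + 13 * N = 12 * V + 13 * N := by
    rw [hV]; ring
  rw [hDeq]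
  have hD0 : (0:ℝ) < 12 * V + 13 * N := by linarith
  rw [div_le_iff₀ (Real.sqrt_pos.2 hD0)]
  calc Real.sqrt (N ^ 3) ≤ Real.sqrt (m ^ 2 * (12 * V + 13 * N)) := Real.sqrt_le_sqrt hfin
    _ = m * Real.sqrt (12 * V + 13 * N) := by
        rw [Real.sqrt_mul (sq_nonneg m), Real.sqrt_sq hm0.le]
end

section
/- Let S be any set of points in a projective plane of order q. Then there exists an integer k such that the number of lines meeting S in exactly k points is at least (q^2+q+1)/sqrt(3q+13). -/
open Finset

private lemma window_card (F : Finset ℕ) (c r : ℝ) (hr : 0 ≤ r)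
    (h : ∀ k ∈ F, |(k : ℝ) - c| < r) : (F.card : ℝ) ≤ 2 * r + 1 := by
  rcases F.eq_empty_or_nonempty with rfl | hne
  · simp; linarith
  · have hmin := F.min'_mem hne
    have hmax := F.max'_mem hne
    have h1 : F ⊆ Finset.Icc (F.min' hne) (F.max' hne) := fun k hk =>
      Finset.mem_Icc.2 ⟨F.min'_le k hk, F.le_max' k hk⟩
    have h2 : F.card ≤ (Finset.Icc (F.min' hne) (F.max' hne)).card := Finset.card_le_card h1
    rw [Nat.card_Icc] at h2
    have hle : F.min' hne ≤ F.max' hne := F.min'_le _ hmax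
    have ha := h _ hmin; have hb := h _ hmax
    rw [abs_lt] at ha hb
    have hc : ((F.max' hne + 1 - F.min' hne : ℕ) : ℝ) = (F.max' hne : ℝ) + 1 - F.min' hne := by
      have : F.min' hne ≤ F.max' hne + 1 := by omega
      push_cast [this]; ring
    calc (F.card : ℝ) ≤ ((F.max' hne + 1 - F.min' hne : ℕ) : ℝ) := by exact_mod_cast h2
      _ = (F.max' hne : ℝ) + 1 - F.min' hne := hc
      _ ≤ 2 * r + 1 := by linarith [ha.1, ha.2, hb.1, hb.2]

private noncomputable def vfun (t μ x : ℝ) : ℝ := max (-t) (min t (x - μ))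

private noncomputable def Hfun (t μ x : ℝ) : ℝ :=
  2 * t ^ 3 / 3 - t ^ 2 * vfun t μ x + (vfun t μ x) ^ 3 / 3

private lemma vfun_lb (t μ x : ℝ) : -t ≤ vfun t μ x := le_max_left _ _

private lemma vfun_ub (t μ x : ℝ) (ht : 0 ≤ t) : vfun t μ x ≤ t :=
  max_le (by linarith) (min_le_left _ _)

private lemma gfun_mono (t a b : ℝ) (h1 : -t ≤ a) (hab : a ≤ b) (h2 : b ≤ t) :
    2 * t ^ 3 / 3 - t ^ 2 * b + b ^ 3 / 3 ≤ 2 * t ^ 3 / 3 - t ^ 2 * a + a ^ 3 / 3 := by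
  have p3 : 0 ≤ (t - a) * (t + b) := mul_nonneg (by linarith) (by linarith)
  have p4 : 0 ≤ (t + a) * (t - b) := mul_nonneg (by linarith) (by linarith)
  have hab2 : a * b ≤ t ^ 2 := by nlinarith
  have ha2 : a ^ 2 ≤ t ^ 2 := by nlinarith
  have hb2 : b ^ 2 ≤ t ^ 2 := by nlinarith
  have h3 : 0 ≤ 3 * t ^ 2 - (a ^ 2 + a * b + b ^ 2) := by linarith
  nlinarith [mul_nonneg (sub_nonneg.2 hab) h3]

private lemma Hfun_mono (t μ x y : ℝ) (ht : 0 ≤ t) (hxy : x ≤ y) :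
    Hfun t μ y ≤ Hfun t μ x := by
  have hab : vfun t μ x ≤ vfun t μ y :=
    max_le_max le_rfl (min_le_min le_rfl (by linarith))
  exact gfun_mono t _ _ (vfun_lb t μ x) hab (vfun_ub t μ y ht)

private lemma Hfun_ub (t μ x : ℝ) (ht : 0 ≤ t) : Hfun t μ x ≤ 4 * t ^ 3 / 3 := by
  have h1 := vfun_lb t μ x; have h2 := vfun_ub t μ x ht
  unfold Hfun
  nlinarith [mul_nonneg (sq_nonneg (t + vfun t μ x)) (by linarith : (0:ℝ) ≤ 2 * t - vfun t μ x)]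

private lemma Hfun_lb (t μ x : ℝ) (ht : 0 ≤ t) : 0 ≤ Hfun t μ x := by
  have h1 := vfun_lb t μ x; have h2 := vfun_ub t μ x ht
  unfold Hfun
  nlinarith [mul_nonneg (sq_nonneg (t - vfun t μ x)) (by linarith : (0:ℝ) ≤ 2 * t + vfun t μ x)]

private lemma Hfun_step (t μ x : ℝ) (ht : 0 < t) (hx : (x - μ) ^ 2 < t ^ 2) :
    t ^ 2 - (x - μ) ^ 2 ≤ Hfun t μ (x - 1/2) - Hfun t μ (x + 1/2) + 1/12 := by
  set u : ℝ := x - μ with hu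
  have hu1 : -t < u := by nlinarith
  have hu2 : u < t := by nlinarith
  have hv1 : vfun t μ (x - 1/2) = max (-t) (u - 1/2) := by
    unfold vfun
    have hxx : x - 1/2 - μ = u - 1/2 := by rw [hu]; ring
    rw [hxx, min_eq_right (by linarith : u - 1/2 ≤ t)]
  have hv2 : vfun t μ (x + 1/2) = min t (u + 1/2) := by
    unfold vfun
    have : x + 1/2 - μ = u + 1/2 := by rw [hu]; ring
    rw [this]
    exact max_eq_right (le_min (by linarith) (by linarith))
  unfold Hfun
  rw [hv1, hv2]
  rcases le_or_gt (-t) (u - 1/2) with h3 | h3 <;> rcases le_or_gt (u + 1/2) t with h4 | h4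
  · rw [max_eq_right h3, min_eq_right h4]; nlinarith
  · rw [max_eq_right h3, min_eq_left (by linarith)]; nlinarith [mul_nonneg (sq_nonneg (u - t + 1/2)) (by linarith : (0:ℝ) ≤ 2*t + u + 1/2)]
  · rw [max_eq_left (by linarith), min_eq_right h4]; nlinarith [mul_nonneg (sq_nonneg (u + t - 1/2)) (by linarith : (0:ℝ) ≤ 2*t - u + 1/2)]
  · rw [max_eq_left (by linarith), min_eq_left (by linarith)]
    nlinarith [mul_nonneg (sq_nonneg (2*t - 1)) (by linarith : (0:ℝ) ≤ 4*t + 1), sq_nonneg u]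

set_option maxHeartbeats 1000000 in
private lemma secant_key (q : ℕ) (r : ℕ → ℝ) (M s : ℝ)
    (hr0 : ∀ k, 0 ≤ r k)
    (hE0 : ∑ k ∈ range (q + 2), r k = (q : ℝ) ^ 2 + q + 1)
    (hE1 : ∑ k ∈ range (q + 2), (k : ℝ) * r k = s * (q + 1))
    (hE2 : ∑ k ∈ range (q + 2), (k : ℝ) ^ 2 * r k = s ^ 2 + s * q)
    (hM : ∀ k ∈ range (q + 2), r k ≤ M)
    (hMN : M ≤ (q : ℝ) ^ 2 + q + 1) :
    (q : ℝ) ^ 2 + q + 1 ≤ M * Real.sqrt (3 * q + 13) := by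
  obtain ⟨N, hN⟩ : ∃ N : ℝ, N = (q : ℝ) ^ 2 + q + 1 := ⟨_, rfl⟩
  rw [← hN] at hE0 hMN ⊢
  have hq0 : (0 : ℝ) ≤ q := Nat.cast_nonneg q
  have hNpos : 0 < N := by rw [hN]; positivity
  have hM0 : 0 ≤ M := le_trans (hr0 0) (hM 0 (by simp))
  have hMpos : 0 < M := by
    rcases lt_or_eq_of_le hM0 with h | h
    · exact h
    · exfalso
      have hle : N ≤ 0 := by
        rw [← hE0]
        have h2 : ∀ k ∈ range (q + 2), r k ≤ 0 := fun k hk => by rw [h]; exact hM k hk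
        have := Finset.sum_le_sum h2
        simpa using this
      linarith
  obtain ⟨μ, hμ⟩ : ∃ μ : ℝ, μ = s * (q + 1) / N := ⟨_, rfl⟩
  obtain ⟨t, htdef⟩ : ∃ t : ℝ, t = N / (2 * M) := ⟨_, rfl⟩
  have ht : 0 < t := by rw [htdef]; positivity
  -- second moment bound
  have hVle : ∑ k ∈ range (q + 2), r k * ((k : ℝ) - μ) ^ 2 ≤ q * N / 4 := by
    have hμN : μ * N = s * (q + 1) := by rw [hμ]; field_simp
    have hVform : ∑ k ∈ range (q + 2), r k * ((k : ℝ) - μ) ^ 2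
        = (s ^ 2 + s * q) - 2 * μ * (s * (q + 1)) + μ ^ 2 * N := by
      rw [← hE2, ← hE1, ← hE0]
      rw [Finset.mul_sum, Finset.mul_sum, ← Finset.sum_sub_distrib, ← Finset.sum_add_distrib]
      exact Finset.sum_congr rfl fun k _ => by ring
    rw [hVform]
    have hNne : ((q:ℝ) ^ 2 + (q:ℝ) + 1) ≠ 0 := by positivity
    have hVN : ((s ^ 2 + s * q) - 2 * μ * (s * (q + 1)) + μ ^ 2 * N) * N
        = s * (q:ℝ) * N - s ^ 2 * (q:ℝ) := by
      rw [hμ, hN]; field_simp; ring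
    have key : ((s ^ 2 + s * q) - 2 * μ * (s * (q + 1)) + μ ^ 2 * N) * N ≤ (q * N / 4) * N := by
      rw [hVN]
      nlinarith [mul_nonneg hq0 (sq_nonneg (N - 2 * s))]
    exact le_of_mul_le_mul_right key hNpos
  -- pointwise bound
  have claimA : ∀ k ∈ range (q + 2),
      r k * t ^ 2 - M * ((Hfun t μ ((k : ℝ) - 1/2) - Hfun t μ ((k : ℝ) + 1/2)) +
        (if ((k : ℝ) - μ) ^ 2 < t ^ 2 then (1:ℝ)/12 else 0)) ≤ r k * ((k : ℝ) - μ) ^ 2 := by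
    intro k hk
    have hHd : 0 ≤ Hfun t μ ((k : ℝ) - 1/2) - Hfun t μ ((k : ℝ) + 1/2) :=
      sub_nonneg.2 (Hfun_mono t μ _ _ ht.le (by linarith))
    by_cases hc : ((k : ℝ) - μ) ^ 2 < t ^ 2
    · rw [if_pos hc]
      have hstep := Hfun_step t μ (k : ℝ) ht hc
      have h1 : r k * (t ^ 2 - ((k:ℝ) - μ) ^ 2) ≤ M * (t ^ 2 - ((k:ℝ) - μ) ^ 2) :=
        mul_le_mul_of_nonneg_right (hM k hk) (by linarith)
      have h2 : M * (t ^ 2 - ((k:ℝ) - μ) ^ 2)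
          ≤ M * ((Hfun t μ ((k : ℝ) - 1/2) - Hfun t μ ((k : ℝ) + 1/2)) + 1/12) :=
        mul_le_mul_of_nonneg_left (by linarith) hM0
      nlinarith
    · rw [if_neg hc]
      push_neg at hc
      have h1 : r k * t ^ 2 ≤ r k * ((k:ℝ) - μ) ^ 2 :=
        mul_le_mul_of_nonneg_left hc (hr0 k)
      nlinarith [mul_nonneg hM0 hHd]
  -- sum it up
  have hsum := Finset.sum_le_sum claimA
  have htele_le : ∑ k ∈ range (q + 2),
      (Hfun t μ ((k : ℝ) - 1/2) - Hfun t μ ((k : ℝ) + 1/2)) ≤ 4 * t ^ 3 / 3 := by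
    have e : ∑ k ∈ range (q + 2),
        (Hfun t μ ((k : ℝ) - 1/2) - Hfun t μ ((k : ℝ) + 1/2))
        = ∑ k ∈ range (q + 2), ((fun i : ℕ => Hfun t μ ((i : ℝ) - 1/2)) k
            - (fun i : ℕ => Hfun t μ ((i : ℝ) - 1/2)) (k + 1)) := by
      refine Finset.sum_congr rfl fun k _ => ?_
      have : ((k + 1 : ℕ) : ℝ) - 1/2 = (k : ℝ) + 1/2 := by push_cast; ring
      simp only [this]
    rw [e, Finset.sum_range_sub']
    have h1 := Hfun_ub t μ (((0 : ℕ) : ℝ) - 1/2) ht.le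
    have h2 := Hfun_lb t μ (((q + 2 : ℕ) : ℝ) - 1/2) ht.le
    linarith
  have hcard : ∑ k ∈ range (q + 2),
      (if ((k : ℝ) - μ) ^ 2 < t ^ 2 then (1:ℝ)/12 else 0) ≤ (2 * t + 1) / 12 := by
    rw [Finset.sum_ite, Finset.sum_const, Finset.sum_const_zero, add_zero]
    have hwin : (((range (q + 2)).filter (fun k : ℕ => ((k : ℝ) - μ) ^ 2 < t ^ 2)).card : ℝ)
        ≤ 2 * t + 1 := by
      refine window_card _ μ t ht.le fun k hk => ?_
      have h2 := (Finset.mem_filter.1 hk).2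
      rw [abs_lt]
      constructor <;> nlinarith
    rw [nsmul_eq_mul]
    revert hwin
    generalize (((range (q + 2)).filter (fun k : ℕ => ((k : ℝ) - μ) ^ 2 < t ^ 2)).card : ℕ) = C
    intro hwin
    linarith
  -- collect
  have hLHS : ∑ k ∈ range (q + 2),
      (r k * t ^ 2 - M * ((Hfun t μ ((k : ℝ) - 1/2) - Hfun t μ ((k : ℝ) + 1/2)) +
        (if ((k : ℝ) - μ) ^ 2 < t ^ 2 then (1:ℝ)/12 else 0)))
      = N * t ^ 2 - M * ((∑ k ∈ range (q + 2),
          (Hfun t μ ((k : ℝ) - 1/2) - Hfun t μ ((k : ℝ) + 1/2)))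
        + ∑ k ∈ range (q + 2), (if ((k : ℝ) - μ) ^ 2 < t ^ 2 then (1:ℝ)/12 else 0)) := by
    rw [Finset.sum_sub_distrib, ← Finset.sum_mul, hE0, ← Finset.mul_sum, Finset.sum_add_distrib]
  have hmain : N * t ^ 2 - M * (4 * t ^ 3 / 3 + (2 * t + 1) / 12) ≤ q * N / 4 := by
    have hsum2 : N * t ^ 2 - M * ((∑ k ∈ range (q + 2),
          (Hfun t μ ((k : ℝ) - 1/2) - Hfun t μ ((k : ℝ) + 1/2)))
        + ∑ k ∈ range (q + 2), (if ((k : ℝ) - μ) ^ 2 < t ^ 2 then (1:ℝ)/12 else 0))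
        ≤ q * N / 4 := by rw [← hLHS]; exact le_trans hsum hVle
    have := mul_le_mul_of_nonneg_left (add_le_add htele_le hcard) hM0
    linarith
  -- substitute t = N/(2M)
  clear hsum claimA hLHS hVle hE0 hE1 hE2 hcard htele_le hM hr0
  have h2Mt : 2 * M * t = N := by
    rw [htdef]; field_simp
  have hfin : N ^ 2 ≤ (3 * q + 13) * M ^ 2 := by
    have e1 : N * t ^ 2 * (12 * M ^ 2) = 3 * N ^ 3 := by
      have : N * t ^ 2 * (12 * M ^ 2) = 3 * N * (2 * M * t) ^ 2 := by ring
      rw [this, h2Mt]; ring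
    have e2 : M * (4 * t ^ 3 / 3) * (12 * M ^ 2) = 2 * N ^ 3 := by
      have : M * (4 * t ^ 3 / 3) * (12 * M ^ 2) = 2 * (2 * M * t) ^ 3 := by ring
      rw [this, h2Mt]
    have e3 : M * ((2 * t + 1) / 12) * (12 * M ^ 2) = M ^ 2 * N + M ^ 3 := by
      have : M * ((2 * t + 1) / 12) * (12 * M ^ 2) = M ^ 2 * (2 * M * t) + M ^ 3 := by ring
      rw [this, h2Mt]
    have hmul := mul_le_mul_of_nonneg_right hmain (by positivity : (0:ℝ) ≤ 12 * M ^ 2)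
    have hN3 : N ^ 3 ≤ 3 * q * M ^ 2 * N + M ^ 2 * N + M ^ 3 := by nlinarith
    have hM3 : M ^ 3 ≤ M ^ 2 * N := by nlinarith
    have : N ^ 3 ≤ (3 * q + 2) * M ^ 2 * N := by nlinarith
    nlinarith
  -- conclude via sqrt
  have h13 : (0:ℝ) ≤ 3 * q + 13 := by positivity
  calc N = Real.sqrt (N ^ 2) := by rw [Real.sqrt_sq hNpos.le]
    _ ≤ Real.sqrt ((3 * q + 13) * M ^ 2) := Real.sqrt_le_sqrt hfin
    _ = M * Real.sqrt (3 * q + 13) := by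
        rw [mul_comm, Real.sqrt_mul (sq_nonneg M), Real.sqrt_sq hM0]

/-- For any point set `S` of a projective plane of order `q`, some secant size `k` occurs
on at least `(q²+q+1)/√(3q+13)` lines. -/
theorem secant_class_lower_bound_simple (q : ℕ) (P L : Type*)
    [Fintype P] [Fintype L] [DecidableEq P]
    (pts : L → Finset P)
    (hline : ∀ l : L, (pts l).card = q + 1)
    (hpoint : ∀ p : P, (Finset.univ.filter (fun l : L => p ∈ pts l)).card = q + 1)
    (hpp : ∀ p p' : P, p ≠ p' → ∃! l : L, p ∈ pts l ∧ p' ∈ pts l)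
    (hll : ∀ l l' : L, l ≠ l' → ∃! p : P, p ∈ pts l ∧ p ∈ pts l')
    (hcardP : Fintype.card P = q ^ 2 + q + 1)
    (hcardL : Fintype.card L = q ^ 2 + q + 1)
    (S : Finset P) :
    ∃ k : ℕ,
      ((q : ℝ) ^ 2 + q + 1) / Real.sqrt (3 * q + 13)
        ≤ ((Finset.univ.filter (fun l : L => ((pts l) ∩ S).card = k)).card : ℝ) := by
  have hmaps : ∀ l ∈ (Finset.univ : Finset L), ((pts l) ∩ S).card ∈ Finset.range (q + 2) := by
    intro l _
    rw [Finset.mem_range]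
    have h := Finset.card_le_card (Finset.inter_subset_left (s₁ := pts l) (s₂ := S))
    rw [hline l] at h
    omega
  set n : ℕ → ℕ := fun k => (Finset.univ.filter (fun l : L => ((pts l) ∩ S).card = k)).card
    with hn
  -- identity 0 : total count of lines
  have hI1 : ∑ k ∈ Finset.range (q + 2), n k = q ^ 2 + q + 1 := by
    rw [← hcardL, ← Finset.card_univ]
    exact (Finset.card_eq_sum_card_fiberwise hmaps).symm ▸ rfl
  -- incidence double count
  have hsum1 : ∑ l : L, ((pts l) ∩ S).card = S.card * (q + 1) := by
    have e1 : ∀ l : L, ((pts l) ∩ S).card = ∑ p ∈ S, if p ∈ pts l then 1 else 0 := by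
      intro l
      rw [← Finset.card_filter]
      congr 1
      rw [Finset.filter_mem_eq_inter, Finset.inter_comm]
    calc ∑ l : L, ((pts l) ∩ S).card
        = ∑ l : L, ∑ p ∈ S, (if p ∈ pts l then 1 else 0) :=
          Finset.sum_congr rfl fun l _ => e1 l
      _ = ∑ p ∈ S, ∑ l : L, (if p ∈ pts l then 1 else 0) := Finset.sum_comm
      _ = ∑ p ∈ S, (q + 1) := by
          refine Finset.sum_congr rfl fun p _ => ?_
          rw [← Finset.card_filter]
          exact hpoint p
      _ = S.card * (q + 1) := by rw [Finset.sum_const, smul_eq_mul]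
  -- pair double count
  have hsum2 : ∑ l : L, ((pts l) ∩ S).offDiag.card + S.card = S.card * S.card := by
    have e2 : ∀ l : L, ((pts l) ∩ S).offDiag.card
        = ∑ pr ∈ S.offDiag, if pr.1 ∈ pts l ∧ pr.2 ∈ pts l then 1 else 0 := by
      intro l
      rw [← Finset.card_filter]
      congr 1
      ext ⟨a, b⟩
      simp only [Finset.mem_offDiag, Finset.mem_filter, Finset.mem_inter]
      tauto
    have step : ∑ l : L, ((pts l) ∩ S).offDiag.card = S.offDiag.card := by
      calc ∑ l : L, ((pts l) ∩ S).offDiag.card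
          = ∑ l : L, ∑ pr ∈ S.offDiag, (if pr.1 ∈ pts l ∧ pr.2 ∈ pts l then 1 else 0) :=
            Finset.sum_congr rfl fun l _ => e2 l
        _ = ∑ pr ∈ S.offDiag, ∑ l : L, (if pr.1 ∈ pts l ∧ pr.2 ∈ pts l then 1 else 0) :=
            Finset.sum_comm
        _ = ∑ pr ∈ S.offDiag, 1 := by
            refine Finset.sum_congr rfl fun pr hpr => ?_
            rw [← Finset.card_filter]
            obtain ⟨l₀, hl₀, hu⟩ := hpp pr.1 pr.2 (Finset.mem_offDiag.1 hpr).2.2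
            rw [Finset.card_eq_one]
            refine ⟨l₀, ?_⟩
            ext l
            simp only [Finset.mem_filter, Finset.mem_univ, true_and, Finset.mem_singleton]
            exact ⟨fun h => hu l h, fun h => h ▸ hl₀⟩
        _ = S.offDiag.card := by rw [Finset.sum_const, smul_eq_mul, mul_one]
    rw [step, Finset.offDiag_card]
    have hcc : S.card ≤ S.card * S.card := by nlinarith [Nat.zero_le (S.card)]
    omega
  -- fiberwise versions
  have hI2 : ∑ k ∈ Finset.range (q + 2), k * n k = S.card * (q + 1) := by
    rw [← hsum1]
    rw [← Finset.sum_fiberwise_of_maps_to hmaps (fun l => ((pts l) ∩ S).card)]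
    refine Finset.sum_congr rfl fun k _ => ?_
    rw [Finset.sum_congr rfl (fun l hl => ((Finset.mem_filter.1 hl).2 : ((pts l) ∩ S).card = k)),
      Finset.sum_const, smul_eq_mul, mul_comm]
  have hI3 : ∑ k ∈ Finset.range (q + 2), k * k * n k = S.card * S.card + S.card * q := by
    have e3 : ∑ k ∈ Finset.range (q + 2), k * k * n k
        = ∑ l : L, ((pts l) ∩ S).card * ((pts l) ∩ S).card := by
      rw [← Finset.sum_fiberwise_of_maps_to hmaps (fun l => ((pts l) ∩ S).card * ((pts l) ∩ S).card)]
      refine Finset.sum_congr rfl fun k _ => ?_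
      rw [Finset.sum_congr rfl (fun l hl => ?_), Finset.sum_const, smul_eq_mul, mul_comm]
      rw [(Finset.mem_filter.1 hl).2]
    have e4 : ∀ l : L, ((pts l) ∩ S).card * ((pts l) ∩ S).card
        = ((pts l) ∩ S).offDiag.card + ((pts l) ∩ S).card := by
      intro l
      rw [Finset.offDiag_card]
      have hcc : ((pts l) ∩ S).card ≤ ((pts l) ∩ S).card * ((pts l) ∩ S).card := by
        nlinarith [Nat.zero_le (((pts l) ∩ S).card)]
      omega
    rw [e3, Finset.sum_congr rfl fun l _ => e4 l, Finset.sum_add_distrib, hsum1]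
    have h5 : S.card * (q + 1) = S.card * q + S.card := by ring
    have h6 : S.card * S.card + S.card * q
        = (∑ l : L, ((pts l) ∩ S).offDiag.card) + S.card + S.card * q := by
      rw [hsum2]
    omega
  -- cast to ℝ and pick the maximizing k
  obtain ⟨k₀, hk₀mem, hk₀max⟩ := Finset.exists_max_image (Finset.range (q + 2)) n
    ⟨0, Finset.mem_range.2 (by omega)⟩
  have hE0 : ∑ k ∈ Finset.range (q + 2), ((n k : ℝ)) = (q : ℝ) ^ 2 + q + 1 := by
    exact_mod_cast congrArg (Nat.cast : ℕ → ℝ) hI1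
  have hE1 : ∑ k ∈ Finset.range (q + 2), (k : ℝ) * (n k : ℝ) = (S.card : ℝ) * ((q : ℝ) + 1) := by
    exact_mod_cast congrArg (Nat.cast : ℕ → ℝ) hI2
  have hE2 : ∑ k ∈ Finset.range (q + 2), (k : ℝ) ^ 2 * (n k : ℝ)
      = (S.card : ℝ) ^ 2 + (S.card : ℝ) * (q : ℝ) := by
    have h := congrArg (Nat.cast : ℕ → ℝ) hI3
    push_cast at h
    calc ∑ k ∈ Finset.range (q + 2), (k : ℝ) ^ 2 * (n k : ℝ)
        = ∑ x ∈ Finset.range (q + 2), (x : ℝ) * (x : ℝ) * (n x : ℝ) :=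
          Finset.sum_congr rfl fun k _ => by ring
      _ = (S.card : ℝ) * (S.card : ℝ) + (S.card : ℝ) * (q : ℝ) := h
      _ = (S.card : ℝ) ^ 2 + (S.card : ℝ) * (q : ℝ) := by ring
  have hM : ∀ k ∈ Finset.range (q + 2), (n k : ℝ) ≤ (n k₀ : ℝ) := fun k hk =>
    Nat.cast_le.2 (hk₀max k hk)
  have hMN : (n k₀ : ℝ) ≤ (q : ℝ) ^ 2 + q + 1 := by
    rw [← hE0]
    exact Finset.single_le_sum (f := fun k => (n k : ℝ)) (fun k _ => Nat.cast_nonneg _) hk₀mem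
  have hkey := secant_key q (fun k => (n k : ℝ)) (n k₀ : ℝ) (S.card : ℝ)
    (fun k => Nat.cast_nonneg _) hE0 hE1 hE2 hM hMN
  refine ⟨k₀, ?_⟩
  rw [div_le_iff₀ (Real.sqrt_pos.2 (by positivity))]
  exact hkey
end

section
/- For every set S of points in a projective plane of order q ≥ 2, the maximum over k of the number of lines meeting S in exactly k points is at least (1/√3)·q^{3/2} − 3q. -/
section Aux

lemma sum_odd_nat' (m : ℕ) : ∑ d ∈ Finset.range m, (2*d+1) = m^2 := by
  induction m with
  | zero => simp
  | succ n ih => rw [Finset.sum_range_succ, ih]; ring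

lemma sum_closed' (N T : ℝ) (D : ℕ) :
    ∑ d ∈ Finset.range D, ((2*(d:ℝ)+1) * (N - (2*(d:ℝ)+2)*T))
      = N*(D:ℝ)^2 - T*((4/3)*(D:ℝ)^3 + (D:ℝ)^2 - (D:ℝ)/3) := by
  induction D with
  | zero => simp
  | succ n ih => rw [Finset.sum_range_succ, ih]; push_cast; ring

lemma final_algebra' (q N T D : ℝ) (hq : 2 ≤ q) (hN : N = q^2 + q + 1)
    (hT : 1 ≤ T) (hD : 0 ≤ D) (h1 : 2*T*D ≤ N) (h2 : N ≤ 2*T*(D+1))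
    (h3 : N*D^2 - T*((4/3)*D^3 + D^2 - D/3) ≤ q*N/4) :
    N^2 ≤ 3*q*(T+3*q)^2 := by
  have hN6 : 0 < N := by nlinarith
  rcases le_or_gt (N/6) T with hc | hc
  · nlinarith [sq_nonneg T, sq_nonneg (T - N/6), mul_pos hN6 hN6]
  · have ha : (N/3 - T) * D^2 ≤ q*N/4 := by
      nlinarith [mul_nonneg (mul_nonneg hD hD) hD, sq_nonneg D,
        mul_le_mul_of_nonneg_right h1 (sq_nonneg D)]
    have hTpos : (0:ℝ) < T := by linarith
    have hb : (N - 3*T) * (N - 2*T)^2 ≤ 3*q*N*T^2 := by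
      have hD2 : (N - 2*T) ≤ 2*T*D := by linarith
      have h4 : (N - 2*T)^2 ≤ (2*T*D)^2 := by
        apply sq_le_sq'
        · nlinarith
        · exact hD2
      nlinarith [mul_le_mul_of_nonneg_left h4 (by linarith : (0:ℝ) ≤ N/3 - T)]
    have h5 : 7*N ≤ 18*q^2 := by nlinarith
    have h5' : 7*N*(T*N) ≤ 18*q^2*(T*N) :=
      mul_le_mul_of_nonneg_right h5 (mul_nonneg hTpos.le hN6.le)
    have h6 : 12*T^3 ≤ 2*N*T^2 := by nlinarith [sq_nonneg T, mul_pos hTpos hTpos]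
    have hnt2 : 0 ≤ N*T^2 := mul_nonneg hN6.le (sq_nonneg T)
    have hq3n : 0 ≤ q^3*N := mul_nonneg (pow_nonneg (by linarith) 3) hN6.le
    have key : N^2*N ≤ (3*q*(T+3*q)^2)*N := by nlinarith [hb, h5', h6, hnt2, hq3n]
    exact le_of_mul_le_mul_right key hN6

variable {L : Type*} [Fintype L]

lemma bad_card' (f : L → ℕ) (μ : ℝ) (T q : ℕ)
    (hf_le : ∀ l, f l ≤ q + 1)
    (hTmax : ∀ j : ℕ, (Finset.univ.filter (fun l : L => f l = j)).card ≤ T) (d : ℕ) :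
    (Finset.univ.filter (fun l : L => |(f l : ℝ) - μ| < d+1)).card ≤ (2*d+2) * T := by
  classical
  set I : Finset ℕ := (Finset.range (q+2)).filter (fun j => |(j:ℝ) - μ| < d+1) with hI
  have hsub : Finset.univ.filter (fun l : L => |(f l : ℝ) - μ| < d+1)
      ⊆ I.biUnion (fun j => Finset.univ.filter (fun l : L => f l = j)) := by
    intro l hl
    simp only [Finset.mem_filter, Finset.mem_univ, true_and] at hl
    refine Finset.mem_biUnion.mpr ⟨f l, ?_, ?_⟩
    · simp only [hI, Finset.mem_filter, Finset.mem_range]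
      exact ⟨by have := hf_le l; omega, hl⟩
    · simp
  have hIcard : I.card ≤ 2*d+2 := by
    rcases I.eq_empty_or_nonempty with h | h
    · simp [h]
    · set a := I.min' h with ha
      have haI : a ∈ I := I.min'_mem h
      have haR : |(a:ℝ) - μ| < d+1 := (Finset.mem_filter.mp haI).2
      have hsub2 : I ⊆ Finset.Icc a (a + (2*d+1)) := by
        intro j hj
        have hjR : |(j:ℝ) - μ| < d+1 := (Finset.mem_filter.mp hj).2
        rw [Finset.mem_Icc]
        refine ⟨I.min'_le j hj, ?_⟩
        have h1 : (j:ℝ) < μ + (d+1) := by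
          have := abs_lt.mp hjR; linarith [this.2]
        have h2 : μ - ((d:ℝ)+1) < a := by
          have := abs_lt.mp haR; linarith [this.1]
        have h3 : j < a + (2*d+2) := by
          exact_mod_cast (by push_cast; linarith : (j:ℝ) < ((a + (2*d+2) : ℕ) : ℝ))
        omega
      calc I.card ≤ (Finset.Icc a (a + (2*d+1))).card := Finset.card_le_card hsub2
        _ = 2*d+2 := by rw [Nat.card_Icc]; omega
  calc (Finset.univ.filter (fun l : L => |(f l : ℝ) - μ| < d+1)).card
      ≤ (I.biUnion (fun j => Finset.univ.filter (fun l : L => f l = j))).card :=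
        Finset.card_le_card hsub
    _ ≤ ∑ j ∈ I, (Finset.univ.filter (fun l : L => f l = j)).card :=
        Finset.card_biUnion_le
    _ ≤ ∑ _j ∈ I, T := Finset.sum_le_sum (fun j _ => hTmax j)
    _ = I.card * T := by rw [Finset.sum_const, smul_eq_mul]
    _ ≤ (2*d+2) * T := Nat.mul_le_mul_right T hIcard

lemma moment_bound' (f : L → ℕ) (μ : ℝ) (D : ℕ) :
    ∑ d ∈ Finset.range D,
      (2*(d:ℝ)+1) * ((Finset.univ.filter (fun l : L => (d:ℝ)+1 ≤ |(f l:ℝ) - μ|)).card : ℝ)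
      ≤ ∑ l : L, ((f l:ℝ) - μ)^2 := by
  classical
  have hcard : ∀ d : ℕ,
      ((Finset.univ.filter (fun l : L => (d:ℝ)+1 ≤ |(f l:ℝ) - μ|)).card : ℝ)
      = ∑ l : L, (if (d:ℝ)+1 ≤ |(f l:ℝ) - μ| then (1:ℝ) else 0) := by
    intro d
    rw [Finset.card_filter]
    push_cast
    rfl
  calc ∑ d ∈ Finset.range D,
      (2*(d:ℝ)+1) * ((Finset.univ.filter (fun l : L => (d:ℝ)+1 ≤ |(f l:ℝ) - μ|)).card : ℝ)
      = ∑ d ∈ Finset.range D, ∑ l : L,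
          (if (d:ℝ)+1 ≤ |(f l:ℝ) - μ| then (2*(d:ℝ)+1) else 0) := by
        refine Finset.sum_congr rfl (fun d _ => ?_)
        rw [hcard, Finset.mul_sum]
        refine Finset.sum_congr rfl (fun l _ => ?_)
        split <;> simp
    _ = ∑ l : L, ∑ d ∈ Finset.range D,
          (if (d:ℝ)+1 ≤ |(f l:ℝ) - μ| then (2*(d:ℝ)+1) else 0) := Finset.sum_comm
    _ ≤ ∑ l : L, ((f l:ℝ) - μ)^2 := by
        refine Finset.sum_le_sum (fun l _ => ?_)
        set x := |(f l:ℝ) - μ| with hx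
        have hx0 : 0 ≤ x := abs_nonneg _
        set m := Nat.floor x with hm
        calc ∑ d ∈ Finset.range D, (if (d:ℝ)+1 ≤ x then (2*(d:ℝ)+1) else 0)
            = ∑ d ∈ Finset.filter (fun d : ℕ => (d:ℝ)+1 ≤ x) (Finset.range D), (2*(d:ℝ)+1) :=
              (Finset.sum_filter _ _).symm
          _ ≤ ∑ d ∈ Finset.range m, (2*(d:ℝ)+1) := by
              refine Finset.sum_le_sum_of_subset_of_nonneg ?_ (fun d _ _ => by positivity)
              intro d hd
              simp only [Finset.mem_filter, Finset.mem_range] at hd ⊢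
              have h1 : ((d+1 : ℕ) : ℝ) ≤ x := by push_cast; linarith [hd.2]
              have := Nat.le_floor h1
              omega
          _ = ((m:ℝ))^2 := by
              have h : ((∑ d ∈ Finset.range m, (2*d+1) : ℕ) : ℝ) = ((m:ℝ))^2 := by
                rw [sum_odd_nat']; push_cast; ring
              rw [← h]
              push_cast
              ring
          _ ≤ x^2 := by
              have := Nat.floor_le hx0
              have hm0 : (0:ℝ) ≤ (m:ℝ) := by positivity
              nlinarith
          _ = ((f l:ℝ) - μ)^2 := sq_abs _

variable {P : Type*} [DecidableEq P] (pts : L → Finset P)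

lemma id1' (q : ℕ)
    (hpoint : ∀ p : P, (Finset.univ.filter (fun l : L => p ∈ pts l)).card = q + 1)
    (S : Finset P) :
    ∑ l : L, ((pts l) ∩ S).card = S.card * (q+1) := by
  have h : ∀ l : L, ((pts l) ∩ S).card = ∑ p ∈ S, if p ∈ pts l then 1 else 0 := by
    intro l
    rw [← Finset.card_filter]
    congr 1
    ext p
    simp [Finset.mem_inter, Finset.mem_filter, and_comm]
  calc ∑ l : L, ((pts l) ∩ S).card = ∑ l : L, ∑ p ∈ S, if p ∈ pts l then 1 else 0 :=
        Finset.sum_congr rfl (fun l _ => h l)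
    _ = ∑ p ∈ S, ∑ l : L, if p ∈ pts l then 1 else 0 := Finset.sum_comm
    _ = ∑ p ∈ S, (q+1) := by
        refine Finset.sum_congr rfl (fun p _ => ?_)
        rw [← Finset.card_filter, hpoint p]
    _ = S.card * (q+1) := by rw [Finset.sum_const, smul_eq_mul]

lemma id2' (q : ℕ)
    (hpoint : ∀ p : P, (Finset.univ.filter (fun l : L => p ∈ pts l)).card = q + 1)
    (hpp : ∀ p p' : P, p ≠ p' → ∃! l : L, p ∈ pts l ∧ p' ∈ pts l)
    (S : Finset P) :
    ∑ l : L, ((pts l) ∩ S).card * ((pts l) ∩ S).card = S.card * S.card + S.card * q := by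
  have key : ∑ l : L, ((pts l ∩ S).offDiag).card = S.card * S.card - S.card := by
    have h : ∀ l : L, ((pts l ∩ S).offDiag).card
        = ∑ pp ∈ S.offDiag, if pp.1 ∈ pts l ∧ pp.2 ∈ pts l then 1 else 0 := by
      intro l
      rw [← Finset.card_filter]
      congr 1
      ext ⟨p, p'⟩
      simp only [Finset.mem_offDiag, Finset.mem_filter, Finset.mem_inter]
      tauto
    calc ∑ l : L, ((pts l ∩ S).offDiag).card
        = ∑ l : L, ∑ pp ∈ S.offDiag, if pp.1 ∈ pts l ∧ pp.2 ∈ pts l then 1 else 0 :=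
          Finset.sum_congr rfl (fun l _ => h l)
      _ = ∑ pp ∈ S.offDiag, ∑ l : L, if pp.1 ∈ pts l ∧ pp.2 ∈ pts l then 1 else 0 :=
          Finset.sum_comm
      _ = ∑ pp ∈ S.offDiag, 1 := by
          refine Finset.sum_congr rfl (fun pp hpp' => ?_)
          rw [← Finset.card_filter]
          obtain ⟨-, -, hne⟩ := Finset.mem_offDiag.mp hpp'
          obtain ⟨l0, hl0, hu⟩ := hpp pp.1 pp.2 hne
          rw [Finset.card_eq_one]
          refine ⟨l0, ?_⟩
          ext l
          simp only [Finset.mem_filter, Finset.mem_univ, true_and, Finset.mem_singleton]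
          exact ⟨fun hl => hu l hl, fun hl => hl ▸ hl0⟩
      _ = S.offDiag.card := by simp
      _ = S.card * S.card - S.card := Finset.offDiag_card _
  have hsum1 := id1' pts q hpoint S
  have h2 : ∀ l : L, ((pts l ∩ S).offDiag).card
      = ((pts l) ∩ S).card * ((pts l) ∩ S).card - ((pts l) ∩ S).card :=
    fun l => Finset.offDiag_card _
  have hle : ∀ l : L, ((pts l) ∩ S).card ≤ ((pts l) ∩ S).card * ((pts l) ∩ S).card := by
    intro l
    rcases Nat.eq_zero_or_pos (((pts l) ∩ S).card) with h | h
    · simp [h]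
    · exact Nat.le_mul_of_pos_left _ h
  have hsle : S.card ≤ S.card * S.card := by
    rcases Nat.eq_zero_or_pos S.card with h | h
    · simp [h]
    · exact Nat.le_mul_of_pos_left _ h
  calc ∑ l : L, ((pts l) ∩ S).card * ((pts l) ∩ S).card
      = ∑ l : L, ((((pts l) ∩ S).card * ((pts l) ∩ S).card - ((pts l) ∩ S).card)
          + ((pts l) ∩ S).card) :=
        Finset.sum_congr rfl (fun l _ => (Nat.sub_add_cancel (hle l)).symm)
    _ = (∑ l : L, (((pts l) ∩ S).card * ((pts l) ∩ S).card - ((pts l) ∩ S).card))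
          + ∑ l : L, ((pts l) ∩ S).card := Finset.sum_add_distrib
    _ = (S.card * S.card - S.card) + S.card * (q+1) := by
        rw [hsum1, ← key]
        congr 1
        exact Finset.sum_congr rfl (fun l _ => (h2 l).symm)
    _ = S.card * S.card + S.card * q := by rw [Nat.mul_add, Nat.mul_one]; omega

end Aux

/-- For every point set `S` of a projective plane of order `q ≥ 2`, the most frequent
secant size occurs on at least `q^{3/2}/√3 - 3q` lines. -/
theorem most_frequent_secant_lower_bound (q : ℕ) (hq : 2 ≤ q) (P L : Type*)
    [Fintype P] [Fintype L] [DecidableEq P]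
    (pts : L → Finset P)
    (hline : ∀ l : L, (pts l).card = q + 1)
    (hpoint : ∀ p : P, (Finset.univ.filter (fun l : L => p ∈ pts l)).card = q + 1)
    (hpp : ∀ p p' : P, p ≠ p' → ∃! l : L, p ∈ pts l ∧ p' ∈ pts l)
    (hll : ∀ l l' : L, l ≠ l' → ∃! p : P, p ∈ pts l ∧ p ∈ pts l')
    (hcardP : Fintype.card P = q ^ 2 + q + 1)
    (hcardL : Fintype.card L = q ^ 2 + q + 1)
    (S : Finset P) :
    ∃ k : ℕ,
      (1 / Real.sqrt 3) * Real.sqrt ((q : ℝ) ^ 3) - 3 * q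
        ≤ ((Finset.univ.filter (fun l : L => ((pts l) ∩ S).card = k)).card : ℝ) := by
  classical
  set n : ℕ := q ^ 2 + q + 1 with hn
  have hf_le : ∀ l : L, ((pts l) ∩ S).card ≤ q + 1 :=
    fun l => (hline l) ▸ Finset.card_le_card Finset.inter_subset_left
  -- choose the most frequent value k among 0..q+1
  obtain ⟨k, hk_mem, hk_max⟩ := Finset.exists_max_image (Finset.range (q+2))
    (fun j => (Finset.univ.filter (fun l : L => ((pts l) ∩ S).card = j)).card)
    ⟨0, Finset.mem_range.mpr (by omega)⟩
  refine ⟨k, ?_⟩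
  set T : ℕ := (Finset.univ.filter (fun l : L => ((pts l) ∩ S).card = k)).card with hT
  have hTmax : ∀ j : ℕ,
      (Finset.univ.filter (fun l : L => ((pts l) ∩ S).card = j)).card ≤ T := by
    intro j
    by_cases hj : j < q + 2
    · exact hk_max j (Finset.mem_range.mpr hj)
    · have hempty : Finset.univ.filter (fun l : L => ((pts l) ∩ S).card = j) = ∅ :=
        Finset.filter_eq_empty_iff.mpr (fun l _ => by have := hf_le l; omega)
      rw [hempty]; simp
  have hLne : Nonempty L := Fintype.card_pos_iff.mp (by rw [hcardL]; positivity)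
  obtain ⟨l0⟩ := hLne
  have hT1 : 1 ≤ T := by
    refine le_trans ?_ (hTmax (((pts l0) ∩ S).card))
    exact Finset.card_pos.mpr ⟨l0, by simp⟩
  have hcardL' : (Finset.univ : Finset L).card = n := by rw [Finset.card_univ, hcardL]
  have hn_pos : (0:ℝ) < (n:ℝ) := by positivity
  set μ : ℝ := (S.card : ℝ) * (q+1) / (n:ℝ) with hμ
  -- sums
  have hsum1 := id1' pts q hpoint S
  have hsum2 := id2' pts q hpoint hpp S
  have hsum1r : ∑ l : L, (((pts l) ∩ S).card : ℝ) = (S.card : ℝ) * (q+1) := by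
    exact_mod_cast congrArg (Nat.cast : ℕ → ℝ) hsum1
  have hnq : (n:ℝ) = (q:ℝ)^2 + (q:ℝ) + 1 := by rw [hn]; push_cast; ring
  have hsum2r : ∑ l : L, (((pts l) ∩ S).card : ℝ)^2
      = (S.card : ℝ)^2 + (S.card : ℝ) * q := by
    have h := congrArg (Nat.cast : ℕ → ℝ) hsum2
    push_cast at h
    calc ∑ l : L, (((pts l) ∩ S).card : ℝ)^2
        = ∑ l : L, (((pts l) ∩ S).card : ℝ) * (((pts l) ∩ S).card : ℝ) :=
          Finset.sum_congr rfl (fun l _ => sq (((pts l) ∩ S).card : ℝ))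
      _ = (S.card : ℝ) * (S.card : ℝ) + (S.card : ℝ) * (q : ℝ) := h
      _ = (S.card : ℝ)^2 + (S.card : ℝ) * q := by ring
  -- second moment bound
  have hS2 : ∑ l : L, ((((pts l) ∩ S).card : ℝ) - μ)^2 ≤ (q:ℝ)*(n:ℝ)/4 := by
    have hexp : ∑ l : L, ((((pts l) ∩ S).card : ℝ) - μ)^2
        = (∑ l : L, (((pts l) ∩ S).card : ℝ)^2)
          - 2*μ*(∑ l : L, (((pts l) ∩ S).card : ℝ)) + (n:ℝ)*μ^2 := by
      rw [Finset.sum_congr rfl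
        (fun l _ => (by ring :
          ((((pts l) ∩ S).card : ℝ) - μ)^2
            = (((pts l) ∩ S).card : ℝ)^2 - 2*μ*(((pts l) ∩ S).card : ℝ) + μ^2))]
      rw [Finset.sum_add_distrib, Finset.sum_sub_distrib, ← Finset.mul_sum,
        Finset.sum_const, hcardL', nsmul_eq_mul]
    rw [hexp, hsum1r, hsum2r, hμ]
    have hq0 : (0:ℝ) ≤ (q:ℝ) := by positivity
    have hne : (n:ℝ) ≠ 0 := ne_of_gt hn_pos
    have hkey : ((S.card:ℝ)^2 + (S.card:ℝ)*q)
        - 2*((S.card:ℝ)*((q:ℝ)+1)/(n:ℝ))*((S.card:ℝ)*((q:ℝ)+1))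
        + (n:ℝ)*((S.card:ℝ)*((q:ℝ)+1)/(n:ℝ))^2
        = ((S.card:ℝ)^2 + (S.card:ℝ)*q) - ((S.card:ℝ)*((q:ℝ)+1))^2/(n:ℝ) := by
      field_simp
      ring
    rw [hkey, sub_le_iff_le_add, ← sub_le_iff_le_add', le_div_iff₀ hn_pos]
    nlinarith [mul_nonneg hq0 (sq_nonneg ((n:ℝ) - 2*(S.card:ℝ)))]
  -- good lines lower bound
  have hgood : ∀ d : ℕ,
      (n:ℝ) - (2*(d:ℝ)+2)*(T:ℝ)
      ≤ ((Finset.univ.filter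
          (fun l : L => (d:ℝ)+1 ≤ |((((pts l) ∩ S).card : ℕ):ℝ) - μ|)).card : ℝ) := by
    intro d
    have hpart := Finset.card_filter_add_card_filter_not
      (s := (Finset.univ : Finset L))
      (p := fun l : L => |((((pts l) ∩ S).card : ℕ):ℝ) - μ| < (d:ℝ)+1)
    have hbad := bad_card' (fun l : L => ((pts l) ∩ S).card) μ T q hf_le hTmax d
    have heq : Finset.univ.filter
          (fun l : L => (d:ℝ)+1 ≤ |((((pts l) ∩ S).card : ℕ):ℝ) - μ|)
        = Finset.univ.filter
          (fun l : L => ¬(|((((pts l) ∩ S).card : ℕ):ℝ) - μ| < (d:ℝ)+1)) := by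
      ext l; simp [not_lt]
    rw [heq]
    rw [hcardL'] at hpart
    have hbadr : ((Finset.univ.filter
        (fun l : L => |((((pts l) ∩ S).card : ℕ):ℝ) - μ| < (d:ℝ)+1)).card : ℝ)
        ≤ (2*(d:ℝ)+2)*(T:ℝ) := by
      calc ((Finset.univ.filter
          (fun l : L => |((((pts l) ∩ S).card : ℕ):ℝ) - μ| < (d:ℝ)+1)).card : ℝ)
          ≤ (((2*d+2)*T : ℕ) : ℝ) := by exact_mod_cast hbad
        _ = (2*(d:ℝ)+2)*(T:ℝ) := by push_cast; ring
    have hpr := congrArg (Nat.cast : ℕ → ℝ) hpart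
    push_cast at hpr
    linarith [hnq]
  -- combine
  clear_value T μ n
  set D : ℕ := n / (2*T) with hD
  have hdm : 2*T*D + n % (2*T) = n := by rw [hD]; exact Nat.div_add_mod n (2*T)
  have hmlt : n % (2*T) < 2*T := Nat.mod_lt _ (by omega)
  have hD1 : 2*T*D ≤ n := by omega
  have hD2 : n < 2*T*D + 2*T := by omega
  clear_value D
  have hchain : (n:ℝ)*(D:ℝ)^2 - (T:ℝ)*((4/3)*(D:ℝ)^3 + (D:ℝ)^2 - (D:ℝ)/3)
      ≤ (q:ℝ)*(n:ℝ)/4 := by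
    rw [← sum_closed']
    calc ∑ d ∈ Finset.range D, ((2*(d:ℝ)+1) * ((n:ℝ) - (2*(d:ℝ)+2)*(T:ℝ)))
        ≤ ∑ d ∈ Finset.range D,
            (2*(d:ℝ)+1) * ((Finset.univ.filter
              (fun l : L => (d:ℝ)+1 ≤ |((((pts l) ∩ S).card : ℕ):ℝ) - μ|)).card : ℝ) :=
          Finset.sum_le_sum (fun d _ =>
            mul_le_mul_of_nonneg_left (hgood d) (by positivity))
      _ ≤ ∑ l : L, (((((pts l) ∩ S).card : ℕ):ℝ) - μ)^2 :=
          moment_bound' (fun l : L => ((pts l) ∩ S).card) μ D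
      _ ≤ (q:ℝ)*(n:ℝ)/4 := hS2
  have hfin : ((n:ℝ))^2 ≤ 3*(q:ℝ)*((T:ℝ)+3*(q:ℝ))^2 := by
    refine final_algebra' (q:ℝ) (n:ℝ) (T:ℝ) (D:ℝ) (by exact_mod_cast hq)
      (by rw [hn]; push_cast; ring) (by exact_mod_cast hT1) (by positivity) ?_ ?_ hchain
    · have h := hD1
      have hc : ((2*T*D : ℕ) : ℝ) ≤ (n:ℝ) := by exact_mod_cast h
      push_cast at hc
      linarith
    · have hc : ((n:ℕ):ℝ) < ((2*T*D + 2*T : ℕ) : ℝ) := by exact_mod_cast hD2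
      push_cast at hc
      linarith
  -- wrap up with square roots
  have hq0 : (0:ℝ) < (q:ℝ) := by positivity
  have hq2n : ((q:ℝ)^2) ≤ (n:ℝ) := by rw [hn]; push_cast; nlinarith
  have h4 : (q:ℝ)^4 ≤ (n:ℝ)^2 := by nlinarith [hq2n, sq_nonneg (q:ℝ), hq0]
  have h7 : (q:ℝ)^4 ≤ 3*(q:ℝ)*((T:ℝ)+3*(q:ℝ))^2 := h4.trans hfin
  have h8 : (q:ℝ)^3 ≤ 3*((T:ℝ)+3*(q:ℝ))^2 := by
    have h8' : (q:ℝ)^3 * (q:ℝ) ≤ (3*((T:ℝ)+3*(q:ℝ))^2) * (q:ℝ) := by linarith [h7]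
    exact le_of_mul_le_mul_right h8' hq0
  have hTq : (0:ℝ) ≤ (T:ℝ)+3*(q:ℝ) := by positivity
  have h9 : Real.sqrt ((q:ℝ)^3) ≤ Real.sqrt 3 * ((T:ℝ)+3*(q:ℝ)) := by
    have h10 : Real.sqrt ((q:ℝ)^3) ≤ Real.sqrt (3*((T:ℝ)+3*(q:ℝ))^2) := Real.sqrt_le_sqrt h8
    rwa [Real.sqrt_mul (by norm_num), Real.sqrt_sq hTq] at h10
  have h3pos : (0:ℝ) < Real.sqrt 3 := Real.sqrt_pos.mpr (by norm_num)
  have h11 : (1 / Real.sqrt 3) * Real.sqrt ((q:ℝ)^3) ≤ (T:ℝ)+3*(q:ℝ) := by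
    calc (1 / Real.sqrt 3) * Real.sqrt ((q:ℝ)^3)
        ≤ (1 / Real.sqrt 3) * (Real.sqrt 3 * ((T:ℝ)+3*(q:ℝ))) :=
          mul_le_mul_of_nonneg_left h9 (by positivity)
      _ = (T:ℝ)+3*(q:ℝ) := by
          rw [← mul_assoc, one_div, inv_mul_cancel₀ (ne_of_gt h3pos), one_mul]
  exact sub_le_iff_le_add.mpr h11
end

section
/- Let 𝓗 be a linear hypergraph with exactly n edges, each edge of size exactly n (n ≥ 1): any two distinct edges share at most one vertex. Then there is a 2-coloring of the vertices (blue/red) such that the numbers of blue vertices of the n edges are pairwise distinct; i.e., the legitimate coloring number of 𝓗 is at most 2. -/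
/-- Strengthened statement for the induction: one can in addition require every
edge to contain at least one blue vertex. -/
lemma aux_legit (n : ℕ) (hn : 1 ≤ n) (V : Type*) [Fintype V] [DecidableEq V] :
    ∀ (F : Fin n → Finset V), (∀ i, (F i).card = n) →
    (∀ i j : Fin n, i ≠ j → (F i ∩ F j).card ≤ 1) →
    ∃ B : Finset V, (∀ i, 1 ≤ (F i ∩ B).card) ∧
      ∀ i j : Fin n, i ≠ j → (F i ∩ B).card ≠ (F j ∩ B).card := by
  induction n, hn using Nat.le_induction with
  | base =>
    intro F hunif hlin
    refine ⟨F 0, ?_, ?_⟩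
    · intro i
      have hi : i = 0 := Subsingleton.elim i 0
      subst hi
      simp [Finset.inter_self, hunif 0]
    · intro i j hij
      exact absurd (Subsingleton.elim i j) hij
  | succ n hn ih =>
    intro F hunif hlin
    -- every edge has a private vertex
    have hpriv : ∀ i : Fin (n+1), ∃ v : V, v ∈ F i ∧ ∀ j, j ≠ i → v ∉ F j := by
      intro i
      set U := (Finset.univ.erase i).biUnion F with hU
      have hcard : (F i ∩ U).card ≤ n := by
        rw [hU, Finset.inter_biUnion]
        calc ((Finset.univ.erase i).biUnion fun j => F i ∩ F j).card
            ≤ ∑ j ∈ Finset.univ.erase i, (F i ∩ F j).card := Finset.card_biUnion_le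
          _ ≤ ∑ _j ∈ Finset.univ.erase i, 1 :=
              Finset.sum_le_sum (fun j hj => hlin i j (Ne.symm (Finset.mem_erase.mp hj).1))
          _ = (Finset.univ.erase i).card := by simp
          _ ≤ n := by
              simp [Finset.card_erase_of_mem (Finset.mem_univ i)]
      have hns : ¬ F i ⊆ U := by
        intro hsub
        have h' : F i ∩ U = F i := Finset.inter_eq_left.mpr hsub
        rw [h', hunif i] at hcard
        omega
      obtain ⟨v, hv1, hv2⟩ := Finset.not_subset.mp hns
      exact ⟨v, hv1, fun j hj hvj =>
        hv2 (Finset.mem_biUnion.mpr ⟨j, Finset.mem_erase.mpr ⟨hj, Finset.mem_univ j⟩, hvj⟩)⟩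
    choose x hx1 hx2 using hpriv
    set L := F (Fin.last n) with hL
    set I : Finset (Fin n) := Finset.univ.filter (fun i => F i.castSucc ∩ L = ∅) with hI
    set D : Finset V := L ∪ I.image (fun i => x i.castSucc) with hD
    have hLD : L ⊆ D := by rw [hD]; exact Finset.subset_union_left
    -- D meets every non-last edge exactly once
    have hkey : ∀ i : Fin n, (F i.castSucc ∩ D).card = 1 := by
      intro i
      by_cases hi : F i.castSucc ∩ L = ∅
      · have heq : F i.castSucc ∩ D = {x i.castSucc} := by
          ext v
          simp only [Finset.mem_inter, hD, Finset.mem_union, Finset.mem_image,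
            Finset.mem_singleton]
          constructor
          · rintro ⟨hvF, hvL | ⟨j, hjI, rfl⟩⟩
            · exact absurd (Finset.mem_inter.mpr ⟨hvF, hvL⟩) (by simp [hi])
            · rcases eq_or_ne j i with rfl | hne
              · rfl
              · exact absurd hvF
                  (hx2 j.castSucc i.castSucc
                    (fun h => hne (Fin.castSucc_injective n h.symm)))
          · rintro rfl
            exact ⟨hx1 _, Or.inr ⟨i, by simp [hI, hi], rfl⟩⟩
        rw [heq, Finset.card_singleton]
      · have heq : F i.castSucc ∩ D = F i.castSucc ∩ L := by
          ext v
          simp only [Finset.mem_inter, hD, Finset.mem_union, Finset.mem_image]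
          constructor
          · rintro ⟨hvF, hvL | ⟨j, hjI, rfl⟩⟩
            · exact ⟨hvF, hvL⟩
            · have hjq : F j.castSucc ∩ L = ∅ := by
                have := (Finset.mem_filter.mp (hI ▸ hjI)).2
                exact this
              rcases eq_or_ne j i with rfl | hne
              · exact absurd hjq hi
              · exact absurd hvF
                  (hx2 j.castSucc i.castSucc
                    (fun h => hne (Fin.castSucc_injective n h.symm)))
          · rintro ⟨hvF, hvL⟩
            exact ⟨hvF, Or.inl hvL⟩
        rw [heq]
        have h1 : (F i.castSucc ∩ L).card ≤ 1 :=
          hlin _ _ (ne_of_lt (Fin.castSucc_lt_last i))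
        have h2 : 0 < (F i.castSucc ∩ L).card :=
          Finset.card_pos.mpr (Finset.nonempty_iff_ne_empty.mpr hi)
        omega
    -- the reduced hypergraph
    set F' : Fin n → Finset V := fun i => F i.castSucc \ D with hF'
    have hunif' : ∀ i, (F' i).card = n := by
      intro i
      have h := Finset.card_inter_add_card_sdiff (F i.castSucc) D
      rw [hkey i, hunif] at h
      simpa [hF'] using by omega
    have hlin' : ∀ i j : Fin n, i ≠ j → (F' i ∩ F' j).card ≤ 1 := by
      intro i j hij
      have hsub : F' i ∩ F' j ⊆ F i.castSucc ∩ F j.castSucc := by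
        rw [hF']
        exact Finset.inter_subset_inter Finset.sdiff_subset Finset.sdiff_subset
      refine le_trans (Finset.card_le_card hsub) (hlin _ _ ?_)
      exact fun h => hij (Fin.castSucc_injective n h)
    obtain ⟨B', hpos, hdist⟩ := ih F' hunif' hlin'
    set B2 : Finset V := B' \ D with hB2
    have hc : ∀ i : Fin n, F i.castSucc ∩ B2 = F' i ∩ B' := by
      intro i
      ext v
      simp only [hB2, hF', Finset.mem_inter, Finset.mem_sdiff]
      tauto
    have hlastc : F (Fin.last n) ∩ B2 = ∅ := by
      rw [Finset.eq_empty_iff_forall_notMem]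
      intro v hv
      have h1 : v ∈ L := by rw [hL]; exact (Finset.mem_inter.mp hv).1
      have h2 : v ∉ D := (Finset.mem_sdiff.mp (Finset.mem_inter.mp hv).2).2
      exact h2 (hLD h1)
    have hcount : ∀ i : Fin (n+1), (F i ∩ B2ᶜ).card + (F i ∩ B2).card = n + 1 := by
      intro i
      have h1 : F i ∩ B2ᶜ = F i \ B2 := (Finset.sdiff_eq_inter_compl (F i) B2).symm
      rw [h1, ← hunif i]
      rw [add_comm]
      exact Finset.card_inter_add_card_sdiff (F i) B2
    have hble : ∀ i : Fin n, (F i.castSucc ∩ B2).card ≤ n := by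
      intro i
      rw [hc i]
      calc (F' i ∩ B').card ≤ (F' i).card := Finset.card_le_card Finset.inter_subset_left
        _ = n := hunif' i
    refine ⟨B2ᶜ, ?_, ?_⟩
    · intro i
      rcases Fin.eq_castSucc_or_eq_last i with ⟨j, rfl⟩ | rfl
      · have := hcount j.castSucc
        have := hble j
        omega
      · have := hcount (Fin.last n)
        rw [hlastc] at this; simp only [Finset.card_empty] at this
        omega
    · intro i j hij
      rcases Fin.eq_castSucc_or_eq_last i with ⟨i0, rfl⟩ | rfl <;>
        rcases Fin.eq_castSucc_or_eq_last j with ⟨j0, rfl⟩ | rfl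
      · have hne : i0 ≠ j0 := fun h => hij (by rw [h])
        have hd : (F' i0 ∩ B').card ≠ (F' j0 ∩ B').card := hdist i0 j0 hne
        have h1 := hcount i0.castSucc
        have h2 := hcount j0.castSucc
        rw [hc i0] at h1
        rw [hc j0] at h2
        have b1 := hble i0
        have b2 := hble j0
        rw [hc i0] at b1
        rw [hc j0] at b2
        omega
      · have h1 := hcount i0.castSucc
        have h2 := hcount (Fin.last n)
        rw [hlastc] at h2; simp only [Finset.card_empty] at h2
        have hp := hpos i0
        rw [hc i0] at h1
        omega
      · have h1 := hcount j0.castSucc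
        have h2 := hcount (Fin.last n)
        rw [hlastc] at h2; simp only [Finset.card_empty] at h2
        have hp := hpos j0
        rw [hc j0] at h1
        omega
      · exact absurd rfl hij
    

/-- Any linear `n`-uniform hypergraph with `n` edges has legitimate coloring number at
most `2`: there is a set `B` of (blue) vertices such that the blue counts `|F i ∩ B|`
of the edges are pairwise distinct. -/
theorem legitimate_two_coloring (n : ℕ) (hn : 1 ≤ n) (V : Type*)
    [Fintype V] [DecidableEq V]
    (F : Fin n → Finset V)
    (hunif : ∀ i : Fin n, (F i).card = n)
    (hlin : ∀ i j : Fin n, i ≠ j → (F i ∩ F j).card ≤ 1) :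
    ∃ B : Finset V, ∀ i j : Fin n, i ≠ j → (F i ∩ B).card ≠ (F j ∩ B).card := by
  obtain ⟨B, _, hB⟩ := aux_legit n hn V F hunif hlin
  exact ⟨B, hB⟩
end

section
/- Let 𝓗 = (V, {F_1,…,F_n}) be a linear n-uniform hypergraph with n edges. Fix an index i and let R_i be the set of private vertices of F_i (vertices of F_i in no other edge), C_i = {j < i : F_j is captured w.r.t. F_i}, where F_j is captured w.r.t. F_i if F_i ∩ F_j = {v} for some v that also lies in some F_k with k < j, and D_i = {j ≠ i : F_i ∩ F_j = ∅}. Then |R_i| ≥ |C_i| + |D_i| + 1. -/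
open scoped Classical

/-- In a linear `n`-uniform hypergraph with `n` edges, for a fixed edge `F i`:
the number of private vertices of `F i` is at least `|C_i| + |D_i| + 1`, where `C_i` is
the set of earlier edges captured w.r.t. `F i` and `D_i` the set of edges disjoint
from `F i`. -/
theorem private_vertices_bound (n : ℕ) (V : Type*) [Fintype V] [DecidableEq V]
    (F : Fin n → Finset V)
    (hunif : ∀ i : Fin n, (F i).card = n)
    (hlin : ∀ i j : Fin n, i ≠ j → (F i ∩ F j).card ≤ 1)
    (i : Fin n)
    (R : Finset V)
    (hR : R = (F i).filter (fun v => ∀ j : Fin n, j ≠ i → v ∉ F j))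
    (C : Finset (Fin n))
    (hC : C = Finset.univ.filter (fun j : Fin n =>
      j < i ∧ ∃ v : V, F i ∩ F j = {v} ∧ ∃ k : Fin n, k < j ∧ v ∈ F k))
    (D : Finset (Fin n))
    (hD : D = Finset.univ.filter (fun j : Fin n => j ≠ i ∧ F i ∩ F j = ∅)) :
    C.card + D.card + 1 ≤ R.card := by
  classical
  -- `T v` : the set of other edges containing `v`
  set T : V → Finset (Fin n) :=
    fun v => Finset.univ.filter (fun j => j ≠ i ∧ v ∈ F j) with hT
  -- the set of non-private vertices of `F i`
  set S : Finset V := F i \ R with hS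
  have hRsub : R ⊆ F i := by
    subst hR; exact Finset.filter_subset _ _
  have hTne : ∀ v ∈ S, (T v).Nonempty := by
    intro v hv
    rcases Finset.mem_sdiff.mp hv with ⟨hvF, hvR⟩
    rw [hR, Finset.mem_filter] at hvR
    push_neg at hvR
    rcases hvR hvF with ⟨j, hj, hvj⟩
    exact ⟨j, by simp [hT, hj, hvj]⟩
  -- the minimal other edge containing `v`
  set f : V → Fin n := fun v => if h : (T v).Nonempty then (T v).min' h else i with hf
  have hfmem : ∀ v ∈ S, f v ∈ T v := by
    intro v hv
    have h := hTne v hv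
    simp only [hf, dif_pos h]
    exact (T v).min'_mem h
  have hfprop : ∀ v ∈ S, f v ≠ i ∧ v ∈ F (f v) := by
    intro v hv
    have := hfmem v hv
    simpa [hT] using this
  -- f maps S into univ \ (insert i (C ∪ D))
  have hmaps : ∀ v ∈ S, f v ∈ Finset.univ \ insert i (C ∪ D) := by
    intro v hv
    rcases hfprop v hv with ⟨hji, hvj⟩
    have hvF : v ∈ F i := (Finset.mem_sdiff.mp hv).1
    refine Finset.mem_sdiff.mpr ⟨Finset.mem_univ _, ?_⟩
    simp only [Finset.mem_insert, Finset.mem_union]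
    push_neg
    refine ⟨hji, ?_, ?_⟩
    · -- not captured
      intro hjC
      rw [hC, Finset.mem_filter] at hjC
      rcases hjC with ⟨-, hlt, w, hw, k, hkj, hwk⟩
      have hvw : v = w := by
        have : v ∈ F i ∩ F (f v) := Finset.mem_inter.mpr ⟨hvF, hvj⟩
        rw [hw] at this
        exact Finset.mem_singleton.mp this
      have hki : k ≠ i := by
        intro h; exact absurd (h ▸ hkj |>.trans hlt) (lt_irrefl i)
      have hkT : k ∈ T v := by simp [hT, hki, hvw ▸ hwk]
      have := Finset.min'_le (T v) k hkT
      have h2 : f v ≤ k := by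
        simpa [hf, dif_pos (hTne v hv)] using this
      exact absurd (lt_of_le_of_lt h2 hkj) (lt_irrefl _)
    · -- not disjoint
      intro hjD
      rw [hD, Finset.mem_filter] at hjD
      rcases hjD with ⟨-, -, hemp⟩
      have : v ∈ F i ∩ F (f v) := Finset.mem_inter.mpr ⟨hvF, hvj⟩
      rw [hemp] at this
      exact absurd this (Finset.notMem_empty v)
  -- f is injective on S
  have hinj : Set.InjOn f S := by
    intro v hv w hw hvw
    rcases hfprop v hv with ⟨hji, hvj⟩
    rcases hfprop w hw with ⟨-, hwj⟩
    have hle := hlin i (f v) (Ne.symm hji)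
    have h1 : v ∈ F i ∩ F (f v) :=
      Finset.mem_inter.mpr ⟨(Finset.mem_sdiff.mp hv).1, hvj⟩
    have h2 : w ∈ F i ∩ F (f v) :=
      Finset.mem_inter.mpr ⟨(Finset.mem_sdiff.mp hw).1, hvw ▸ hwj⟩
    exact Finset.card_le_one.mp hle v h1 w h2
  have hcard := Finset.card_le_card_of_injOn f hmaps hinj
  -- cardinalities
  have hScard : S.card = n - R.card := by
    rw [hS, Finset.card_sdiff_of_subset hRsub, hunif i]
  have hRle : R.card ≤ n := by
    have := Finset.card_le_card hRsub
    rwa [hunif i] at this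
  have hiC : i ∉ C := by
    rw [hC]; simp only [Finset.mem_filter]
    rintro ⟨-, hlt, -⟩; exact absurd hlt (lt_irrefl i)
  have hiD : i ∉ D := by
    rw [hD]; simp only [Finset.mem_filter]
    rintro ⟨-, hne, -⟩; exact hne rfl
  have hCD : Disjoint C D := by
    rw [Finset.disjoint_left]
    intro j hjC hjD
    rw [hC, Finset.mem_filter] at hjC
    rw [hD, Finset.mem_filter] at hjD
    rcases hjC with ⟨-, -, w, hw, -⟩
    rcases hjD with ⟨-, -, hemp⟩
    rw [hemp] at hw
    exact absurd hw.symm (Finset.singleton_ne_empty w)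
  have hins : (insert i (C ∪ D)).card = 1 + C.card + D.card := by
    rw [Finset.card_insert_of_notMem (by simp [hiC, hiD]),
      Finset.card_union_of_disjoint hCD]
    ring
  have hsub : insert i (C ∪ D) ⊆ Finset.univ := Finset.subset_univ _
  have hinsle : (insert i (C ∪ D)).card ≤ n := by
    have := Finset.card_le_card hsub
    simpa using this
  have huniv : (Finset.univ \ insert i (C ∪ D)).card
      = n - (insert i (C ∪ D)).card := by
    rw [Finset.card_sdiff_of_subset hsub]; simp
  rw [hScard, huniv, hins] at hcard
  rw [hins] at hinsle
  omega
end
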